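/- For π, ρ ∈ NC(n), one has A(π) ∨ A(ρ) = 1_{2n} in the lattice NC(2n) if and only if π ∨ ρ = 1_n and π ∧ ρ = 0_n in the lattice NC(n). -/

import Mathlib

open scoped Classical

/-- A setoid (partition) of `Fin n` is non-crossing if there is no crossing
`a < b < c < d` with `a ∼ c`, `b ∼ d` but `a` and `b` in distinct blocks. -/
def IsNC {n : ℕ} (S : Setoid (Fin n)) : Prop :=
  ∀ a b c d : Fin n, a < b → b < c → c < d → S.r a c → S.r b d → S.r a b

/-- A partition is a pairing if every block has exactly two elements. -/
def IsPairing {m : ℕ} (T : Setoid (Fin m)) : Prop :=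
  ∀ x : Fin m, ∃ y : Fin m, y ≠ x ∧ T.r x y ∧ ∀ z : Fin m, T.r x z → z = x ∨ z = y

/-- The block of `i` in the partition `S`, as a finset. -/
noncomputable def blockOf {n : ℕ} (S : Setoid (Fin n)) (i : Fin n) : Finset (Fin n) :=
  Finset.univ.filter (fun j => S.r i j)

lemma blockOf_nonempty {n : ℕ} (S : Setoid (Fin n)) (i : Fin n) :
    (blockOf S i).Nonempty :=
  ⟨i, by simp [blockOf, S.iseqv.refl i]⟩

/-- The permutation `P_S` which performs an increasing cycle on every block of `S`:
it sends `i` to the next larger element of its block, or to the minimum of the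
block if `i` is the largest element of its block. -/
noncomputable def nextP {n : ℕ} (S : Setoid (Fin n)) (i : Fin n) : Fin n :=
  if h : ((blockOf S i).filter (fun j => i < j)).Nonempty
  then ((blockOf S i).filter (fun j => i < j)).min' h
  else (blockOf S i).min' (blockOf_nonempty S i)

/-- The inverse permutation `P_S⁻¹` (decreasing cycle on every block of `S`). -/
noncomputable def prevP {n : ℕ} (S : Setoid (Fin n)) (i : Fin n) : Fin n :=
  if h : ((blockOf S i).filter (fun j => j < i)).Nonempty
  then ((blockOf S i).filter (fun j => j < i)).max' h
  else (blockOf S i).max' (blockOf_nonempty S i)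

/-- `0`-indexed version of the point `2i-1` of `{1,…,2n}`. -/
def dEven {n : ℕ} (j : Fin n) : Fin (2*n) := ⟨2*j.val, by have := j.isLt; omega⟩

/-- `0`-indexed version of the point `2i` of `{1,…,2n}`. -/
def dOdd {n : ℕ} (j : Fin n) : Fin (2*n) := ⟨2*j.val+1, by have := j.isLt; omega⟩

/-- The doubling construction `π ↦ A(π)`: the pairing of `{1,…,2n}` generated by
pairing each point `2i` with `2P_π(i) - 1`, so that the associated permutation
satisfies `P_{A(π)}(2i) = 2P_π(i) - 1` and `P_{A(π)}(2i-1) = 2P_π⁻¹(i)`. -/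
noncomputable def archSetoid {n : ℕ} (S : Setoid (Fin n)) : Setoid (Fin (2*n)) :=
  Relation.EqvGen.setoid (fun a b => ∃ j : Fin n, a = dOdd j ∧ b = dEven (nextP S j))

/-- The meandric system permutation `M_{π,ρ} ∈ S_{2n}`, defined by
`M_{π,ρ}(2i-1) = 2P_π⁻¹(i)` and `M_{π,ρ}(2i) = 2P_ρ(i) - 1` (here `0`-indexed). -/
noncomputable def meanderMap {n : ℕ} (π ρ : Setoid (Fin n)) (x : Fin (2*n)) : Fin (2*n) :=
  if x.val % 2 = 0
  then dOdd (prevP π ⟨x.val / 2, by have := x.isLt; omega⟩)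
  else dEven (nextP ρ ⟨x.val / 2, by have := x.isLt; omega⟩)

/-- The orbit partition of a map. -/
def orbitSetoid {m : ℕ} (f : Fin m → Fin m) : Setoid (Fin m) :=
  Relation.EqvGen.setoid (fun a b => f a = b)

/-- Number of orbits of a map. -/
noncomputable def numOrbits {m : ℕ} (f : Fin m → Fin m) : ℕ :=
  Nat.card (Quotient (orbitSetoid f))

/-- `S` is a union of blocks of the partition `T`. -/
def IsBlockUnion {m : ℕ} (T : Setoid (Fin m)) (S : Set (Fin m)) : Prop :=
  ∀ x ∈ S, ∀ y, T.r x y → y ∈ S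

/-- `S` is invariant under `f`. -/
def MInvariant {m : ℕ} (f : Fin m → Fin m) (S : Set (Fin m)) : Prop :=
  ∀ x ∈ S, f x ∈ S

/-- The meandric system `M_{π,ρ}` is reducible: some proper subinterval
`{a,…,b}` of `{1,…,2n}` is invariant under `M_{π,ρ}`. -/
noncomputable def Reducible {n : ℕ} (π ρ : Setoid (Fin n)) : Prop :=
  ∃ a b : Fin (2*n), a ≤ b ∧ b.val - a.val < 2*n - 1 ∧
    MInvariant (meanderMap π ρ) {x | a ≤ x ∧ x ≤ b}

/-- The join in the lattice of non-crossing partitions: the smallest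
non-crossing partition above both `π` and `ρ`. -/
noncomputable def ncJoin {m : ℕ} (π ρ : Setoid (Fin m)) : Setoid (Fin m) :=
  sInf {τ | IsNC τ ∧ π ≤ τ ∧ ρ ≤ τ}

/-- The moment-cumulant formula of free probability: `mom n` is the sum over all
non-crossing partitions of `{1,…,n}` of the products of cumulants `κ` indexed
by the block sizes.  This uniquely determines the free cumulants `κ n`, `n ≥ 1`,
of a sequence of moments. -/
def MomCum {F : Type*} [Field F] (mom κ : ℕ → F) : Prop :=
  ∀ n : ℕ, 0 < n →
    mom n = ∑ᶠ S ∈ {S : Setoid (Fin n) | IsNC S}, ∏ᶠ B ∈ Setoid.classes S, κ B.ncard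

/-- The number of irreducible meandric systems on `2k` bridges, described as the
number of pairs `(π,ρ) ∈ NC(k)²` with `π ∨ ρ = 1_k`, `π ∧ ρ = 0_k`. -/
noncomputable def mirr (k : ℕ) : ℕ :=
  Nat.card {pr : Setoid (Fin k) × Setoid (Fin k) //
    IsNC pr.1 ∧ IsNC pr.2 ∧ ncJoin pr.1 pr.2 = ⊤ ∧ pr.1 ⊓ pr.2 = ⊥}

/-- The number of pairs `(π,ρ) ∈ NC(n)²` whose meandric system `M_{π,ρ}` has
exactly `k` orbits (connected components). -/
noncomputable def mcount (n k : ℕ) : ℕ :=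
  Nat.card {pr : Setoid (Fin n) × Setoid (Fin n) //
    IsNC pr.1 ∧ IsNC pr.2 ∧ numOrbits (meanderMap pr.1 pr.2) = k}

/-- The number of meanders on `2n` bridges. -/
noncomputable def meanderNum (n : ℕ) : ℕ := mcount n 1

/-! A non-crossing partition `σ ≠ ⊤` has a proper interval that is a union of its blocks (the convex
hull of a block), and an interval `I` gives the non-crossing partition `{I, Iᶜ}`; so
`ncJoin π ρ ≠ ⊤` iff some proper interval is a union of blocks of both `π` and `ρ`.

A set is a union of blocks of `archSetoid θ` iff `nextP θ` carries the indices `j` of its odd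
points `dOdd j` exactly onto the indices of its even points `dEven j`. Depending on the parities
of the endpoints, for an interval of `Fin (2 * n)` this says that `[i, k]` is a union of blocks
of `θ`, or that `nextP θ` maps `[i, k)` onto `(i, k]`, which for non-crossing `θ` means `i ∼ k`,
or it is impossible because the interval has one more even than odd point or vice versa. -/

open Set

lemma Fin.ncard_Icc {n : ℕ} (i k : Fin n) : (Icc i k).ncard = k + 1 - i := by
  rw [← Finset.coe_Icc, ncard_coe_finset, Fin.card_Icc]

lemma Fin.ncard_Ico {n : ℕ} (i k : Fin n) : (Ico i k).ncard = k - i := by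
  rw [← Finset.coe_Ico, ncard_coe_finset, Fin.card_Ico]

lemma Fin.ncard_Ioc {n : ℕ} (i k : Fin n) : (Ioc i k).ncard = k - i := by
  rw [← Finset.coe_Ioc, ncard_coe_finset, Fin.card_Ioc]

section NextP

variable {n : ℕ} {S : Setoid (Fin n)}

lemma mem_blockOf_iff {i j : Fin n} : j ∈ blockOf S i ↔ S.r i j := by
  simp [blockOf]

lemma rel_nextP (S : Setoid (Fin n)) (i : Fin n) : S.r i (nextP S i) := by
  rw [← mem_blockOf_iff, nextP]
  split_ifs with h
  · exact (Finset.mem_filter.mp (Finset.min'_mem _ h)).1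
  · exact Finset.min'_mem _ _

lemma lt_nextP_of_rel {a b : Fin n} (h : S.r a b) (hab : a < b) :
    a < nextP S a ∧ nextP S a ≤ b := by
  have hb : b ∈ (blockOf S a).filter (a < ·) := by simp [mem_blockOf_iff, h, hab]
  rw [nextP, dif_pos ⟨b, hb⟩]
  exact ⟨(Finset.mem_filter.mp (Finset.min'_mem _ _)).2, Finset.min'_le _ _ hb⟩

lemma lt_nextP_or_nextP_le (a : Fin n) :
    a < nextP S a ∨ ∀ b, S.r a b → nextP S a ≤ b := by
  by_cases h : ((blockOf S a).filter (a < ·)).Nonempty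
  · obtain ⟨b, hb⟩ := h
    rw [Finset.mem_filter, mem_blockOf_iff] at hb
    exact .inl (lt_nextP_of_rel hb.1 hb.2).1
  · right
    intro b hb
    rw [nextP, dif_neg h]
    exact Finset.min'_le _ _ (mem_blockOf_iff.mpr hb)

lemma nextP_injective (S : Setoid (Fin n)) : Function.Injective (nextP S) := by
  have key : ∀ a b, a < b → nextP S a = nextP S b → False := by
    intro a b hab he
    have hr : S.r a b := S.trans (rel_nextP S a) (he ▸ S.symm (rel_nextP S b))
    obtain ⟨ha, hb⟩ := lt_nextP_of_rel hr hab
    rcases lt_nextP_or_nextP_le (S := S) b with h | h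
    · exact absurd (he ▸ hb) (not_le.mpr h)
    · exact absurd (he ▸ h a (S.symm hr)) (not_le.mpr ha)
  intro a b he
  rcases lt_trichotomy a b with h | h | h
  · exact (key a b h he).elim
  · exact h
  · exact (key b a h he.symm).elim

lemma nextP_surjective (S : Setoid (Fin n)) : Function.Surjective (nextP S) :=
  Finite.surjective_of_injective (nextP_injective S)

lemma exists_nextP_eq_of_rel_of_lt {x y : Fin n} (h : S.r x y) (hxy : x < y) :
    ∃ w, S.r x w ∧ x ≤ w ∧ w < y ∧ nextP S w = y := by
  obtain ⟨w, rfl⟩ := nextP_surjective S y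
  have hxw : S.r x w := S.trans h (S.symm (rel_nextP S w))
  have hwx : x ≤ w := by
    by_contra! hwx
    exact absurd (lt_nextP_of_rel (S.symm hxw) hwx).2 (not_le.mpr hxy)
  rcases lt_nextP_or_nextP_le (S := S) w with hw | hw
  · exact ⟨w, hxw, hwx, hw, rfl⟩
  · exact absurd (hw x (S.symm hxw)) (not_le.mpr hxy)

lemma mem_of_mapsTo_nextP {s : Set (Fin n)} (hs : MapsTo (nextP S) s s) {x y : Fin n}
    (hx : x ∈ s) (hxy : S.r x y) (hle : x ≤ y) : y ∈ s := by
  induction y using WellFoundedLT.induction with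
  | ind y ih =>
    rcases hle.eq_or_lt with rfl | hlt
    · exact hx
    obtain ⟨w, hxw, hle', hwy, rfl⟩ := exists_nextP_eq_of_rel_of_lt hxy hlt
    exact hs (ih w hwy hxw hle')

lemma isBlockUnion_iff_preimage_nextP_eq {s : Set (Fin n)} :
    IsBlockUnion S s ↔ nextP S ⁻¹' s = s := by
  refine ⟨fun h => Set.ext fun x => ⟨fun hx => h _ hx x (S.symm (rel_nextP S x)),
    fun hx => h x hx _ (rel_nextP S x)⟩, fun h x hx y hxy => ?_⟩
  have hs : MapsTo (nextP S) s s := fun z hz => by rwa [← h] at hz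
  have hsc : MapsTo (nextP S) sᶜ sᶜ := fun z hz => by rwa [← h] at hz
  rcases le_total x y with hle | hle
  · exact mem_of_mapsTo_nextP hs hx hxy hle
  · by_contra hy
    exact mem_of_mapsTo_nextP hsc hy (S.symm hxy) hle hx

lemma rel_iterate_nextP (x : Fin n) (t : ℕ) : S.r x ((nextP S)^[t] x) := by
  induction t with
  | zero => exact S.refl x
  | succ t ih =>
    rw [Function.iterate_succ_apply']
    exact S.trans ih (rel_nextP S _)

/-- The orbit of `i` under the permutation `nextP S` would stay in `(i, k)`, yet it returns
to `i`. -/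
lemma rel_of_mapsTo_nextP_Ico_Ioc {i k : Fin n} (hik : i < k)
    (h : MapsTo (nextP S) (Ico i k) (Ioc i k)) : S.r i k := by
  by_contra hne
  have step : ∀ z ∈ Ico i k, S.r i z → nextP S z ∈ Ioo i k := fun z hz hiz =>
    ⟨(h hz).1, lt_of_le_of_ne (h hz).2 fun he => hne (he ▸ S.trans hiz (rel_nextP S z))⟩
  have orbit : ∀ t, (nextP S)^[t + 1] i ∈ Ioo i k := by
    intro t
    induction t with
    | zero => exact step i ⟨le_rfl, hik⟩ (S.refl i)
    | succ t ih =>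
      rw [Function.iterate_succ_apply']
      exact step _ (Ioo_subset_Ico_self ih) (rel_iterate_nextP i _)
  obtain ⟨m, hm, hper⟩ := (nextP_injective S).mem_periodicPts i
  obtain ⟨t, rfl⟩ := Nat.exists_eq_add_one_of_ne_zero hm.ne'
  exact lt_irrefl i (hper ▸ orbit t).1

lemma ncard_preimage_nextP (S : Setoid (Fin n)) (t : Set (Fin n)) :
    (nextP S ⁻¹' t).ncard = t.ncard :=
  ncard_preimage_of_injective_subset_range (nextP_injective S)
    (by simp [(nextP_surjective S).range_eq])

lemma IsNC.mapsTo_nextP_Ico_Ioc (hS : IsNC S) {i k : Fin n} (hik : S.r i k) :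
    MapsTo (nextP S) (Ico i k) (Ioc i k) := by
  intro j ⟨hij, hjk⟩
  by_cases hjk' : S.r j k
  · obtain ⟨h1, h2⟩ := lt_nextP_of_rel hjk' hjk
    exact ⟨hij.trans_lt h1, h2⟩
  have hij' : ¬ S.r i j := fun h => hjk' (S.trans (S.symm h) hik)
  replace hij : i < j := hij.lt_of_ne fun h => hij' (h ▸ S.refl i)
  have hj := rel_nextP S j
  -- otherwise the pairs `{j, nextP S j}` and `{i, k}` would cross
  refine ⟨lt_of_not_ge fun hle => ?_, le_of_not_gt fun hlt => ?_⟩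
  · rcases hle.eq_or_lt with he | hlt
    · exact hij' (he ▸ S.symm hj)
    · exact hij' (S.trans (S.symm (hS _ _ _ _ hlt hij hjk (S.symm hj) hik)) (S.symm hj))
  · exact hij' (hS _ _ _ _ hij hjk hlt hik hj)

lemma IsNC.preimage_nextP_Ioc (hS : IsNC S) {i k : Fin n} (hik : S.r i k) :
    nextP S ⁻¹' Ioc i k = Ico i k := by
  have hcard : (nextP S ⁻¹' Ioc i k).ncard ≤ (Ico i k).ncard := by
    rw [ncard_preimage_nextP, Fin.ncard_Ico, Fin.ncard_Ioc]
  exact (eq_of_subset_of_ncard_le (hS.mapsTo_nextP_Ico_Ioc hik) hcard (toFinite _)).symm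

end NextP

section Join

variable {m : ℕ}

lemma exists_lt_rel_of_ne_bot {σ : Setoid (Fin m)} (h : σ ≠ ⊥) :
    ∃ i k, i < k ∧ σ.r i k := by
  by_contra! hσ
  refine h (le_antisymm (fun x y hxy => ?_) bot_le)
  rcases lt_trichotomy x y with hlt | rfl | hlt
  · exact (hσ x y hlt hxy).elim
  · exact Setoid.refl' ⊥ x
  · exact (hσ y x hlt (σ.symm hxy)).elim

lemma IsBlockUnion.mono {T T' : Setoid (Fin m)} {s : Set (Fin m)} (hT : T ≤ T')
    (h : IsBlockUnion T' s) : IsBlockUnion T s :=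
  fun x hx y hxy => h x hx y (hT hxy)

lemma isBlockUnion_iff_le_ker {T : Setoid (Fin m)} {s : Set (Fin m)} :
    IsBlockUnion T s ↔ T ≤ Setoid.ker (· ∈ s) := by
  simp only [Setoid.le_def, Setoid.ker_def, eq_iff_iff]
  exact ⟨fun h x y hxy => ⟨fun hx => h x hx y hxy, fun hy => h y hy x (T.symm hxy)⟩,
    fun h x hx y hxy => (h hxy).1 hx⟩

lemma isNC_ker_mem_Icc (a b : Fin m) : IsNC (Setoid.ker (· ∈ Icc a b)) := by
  intro p q r s hpq hqr hrs hpr hqs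
  simp only [Setoid.ker_def, eq_iff_iff, mem_Icc] at *
  constructor
  · intro hp
    exact ⟨hp.1.trans hpq.le, hqr.le.trans (hpr.1 hp).2⟩
  · intro hq
    exact hpr.2 ⟨hq.1.trans hqr.le, hrs.le.trans (hqs.1 hq).2⟩

lemma IsNC.isBlockUnion_Icc {σ : Setoid (Fin m)} (hσ : IsNC σ) {a b : Fin m} (hab : σ.r a b)
    (ha : ∀ x, σ.r a x → a ≤ x) (hb : ∀ x, σ.r b x → x ≤ b) : IsBlockUnion σ (Icc a b) := by
  intro x ⟨hax, hxb⟩ y hxy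
  by_cases hx : σ.r a x
  · have hay := σ.trans hx hxy
    exact ⟨ha y hay, hb y (σ.trans (σ.symm hab) hay)⟩
  have hax : a < x := hax.lt_of_ne fun h => hx (h ▸ σ.refl a)
  have hxb : x < b := hxb.lt_of_ne fun h => hx (h ▸ hab)
  refine ⟨le_of_not_gt fun hya => ?_, le_of_not_gt fun hby => ?_⟩
  · exact hx (σ.trans (σ.symm (hσ _ _ _ _ hya hax hxb (σ.symm hxy) hab)) (σ.symm hxy))
  · exact hx (hσ _ _ _ _ hax hxb hby hab hxy)

lemma IsNC.exists_isBlockUnion_Icc {σ : Setoid (Fin m)} (hσ : IsNC σ) (hne : σ ≠ ⊤) :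
    ∃ a b : Fin m, a ≤ b ∧ Icc a b ≠ univ ∧ IsBlockUnion σ (Icc a b) := by
  obtain ⟨x, y, hxy⟩ : ∃ x y, ¬ σ.r x y := by
    by_contra! h
    exact hne (Setoid.eq_top_iff.mpr h)
  let z : Fin m := ⟨0, x.pos⟩
  obtain ⟨w, hzw⟩ : ∃ w, ¬ σ.r z w := by
    by_contra! h
    exact hxy (σ.trans (σ.symm (h x)) (h y))
  set a := (blockOf σ w).min' (blockOf_nonempty σ w)
  set b := (blockOf σ w).max' (blockOf_nonempty σ w)
  have hwa : σ.r w a := mem_blockOf_iff.mp (Finset.min'_mem _ _)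
  have hwb : σ.r w b := mem_blockOf_iff.mp (Finset.max'_mem _ _)
  refine ⟨a, b, Finset.min'_le_max' _ (blockOf_nonempty σ w), fun h => ?_, ?_⟩
  · have hza : a ≤ z := (h ▸ mem_univ z : z ∈ Icc a b).1
    exact hzw (le_antisymm hza (Nat.zero_le _) ▸ σ.symm hwa)
  · refine hσ.isBlockUnion_Icc (σ.trans (σ.symm hwa) hwb) (fun x hx => ?_) (fun x hx => ?_)
    · exact Finset.min'_le _ _ (mem_blockOf_iff.mpr (σ.trans hwa hx))
    · exact Finset.le_max' _ _ (mem_blockOf_iff.mpr (σ.trans hwb hx))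

lemma ncJoin_ne_top_iff (π ρ : Setoid (Fin m)) :
    ncJoin π ρ ≠ ⊤ ↔ ∃ a b : Fin m, a ≤ b ∧ Icc a b ≠ univ ∧
      IsBlockUnion π (Icc a b) ∧ IsBlockUnion ρ (Icc a b) := by
  constructor
  · intro h
    obtain ⟨σ, ⟨hσ, hπσ, hρσ⟩, hσne⟩ : ∃ σ ∈ {τ | IsNC τ ∧ π ≤ τ ∧ ρ ≤ τ}, σ ≠ ⊤ := by
      by_contra! h'
      exact h (sInf_eq_top.mpr h')
    obtain ⟨a, b, hab, hne, hσab⟩ := hσ.exists_isBlockUnion_Icc hσne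
    exact ⟨a, b, hab, hne, hσab.mono hπσ, hσab.mono hρσ⟩
  · rintro ⟨a, b, hab, hne, hπ, hρ⟩ htop
    obtain ⟨z, hz⟩ := (ne_univ_iff_exists_notMem _).mp hne
    have hle : ncJoin π ρ ≤ Setoid.ker (· ∈ Icc a b) :=
      sInf_le ⟨isNC_ker_mem_Icc a b, isBlockUnion_iff_le_ker.mp hπ, isBlockUnion_iff_le_ker.mp hρ⟩
    rw [htop, top_le_iff, Setoid.eq_top_iff] at hle
    exact hz ((Setoid.ker_def.mp (hle a z)).mp ⟨le_rfl, hab⟩)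

end Join

section Doubling

variable {n : ℕ}

@[simp] lemma dEven_val (j : Fin n) : (dEven j).val = 2 * j.val := rfl

@[simp] lemma dOdd_val (j : Fin n) : (dOdd j).val = 2 * j.val + 1 := rfl

lemma exists_eq_dEven_or_dOdd (x : Fin (2 * n)) : (∃ i, x = dEven i) ∨ ∃ i, x = dOdd i := by
  have hx := x.isLt
  rcases Nat.even_or_odd' x.val with ⟨i, hi | hi⟩
  · exact .inl ⟨⟨i, by omega⟩, Fin.ext hi⟩
  · exact .inr ⟨⟨i, by omega⟩, Fin.ext hi⟩

lemma eq_univ_of_preimage_dEven_dOdd {s : Set (Fin (2 * n))} (he : dEven ⁻¹' s = univ)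
    (ho : dOdd ⁻¹' s = univ) : s = univ := by
  refine eq_univ_of_forall fun x => ?_
  rcases exists_eq_dEven_or_dOdd x with ⟨i, rfl⟩ | ⟨i, rfl⟩
  · exact (he ▸ mem_univ i : i ∈ dEven ⁻¹' s)
  · exact (ho ▸ mem_univ i : i ∈ dOdd ⁻¹' s)

section Preimage

variable (i k : Fin n)

lemma preimage_dOdd_Icc_dEven_dOdd : dOdd ⁻¹' Icc (dEven i) (dOdd k) = Icc i k := by
  ext j
  simp only [mem_preimage, mem_Icc, Fin.le_def, dOdd_val, dEven_val]
  omega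

lemma preimage_dEven_Icc_dEven_dOdd : dEven ⁻¹' Icc (dEven i) (dOdd k) = Icc i k := by
  ext j
  simp only [mem_preimage, mem_Icc, Fin.le_def, dOdd_val, dEven_val]
  omega

lemma preimage_dOdd_Icc_dOdd_dEven : dOdd ⁻¹' Icc (dOdd i) (dEven k) = Ico i k := by
  ext j
  simp only [mem_preimage, mem_Icc, mem_Ico, Fin.le_def, Fin.lt_def, dOdd_val, dEven_val]
  omega

lemma preimage_dEven_Icc_dOdd_dEven : dEven ⁻¹' Icc (dOdd i) (dEven k) = Ioc i k := by
  ext j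
  simp only [mem_preimage, mem_Icc, mem_Ioc, Fin.le_def, Fin.lt_def, dOdd_val, dEven_val]
  omega

lemma preimage_dOdd_Icc_dEven_dEven : dOdd ⁻¹' Icc (dEven i) (dEven k) = Ico i k := by
  ext j
  simp only [mem_preimage, mem_Icc, mem_Ico, Fin.le_def, Fin.lt_def, dOdd_val, dEven_val]
  omega

lemma preimage_dEven_Icc_dEven_dEven : dEven ⁻¹' Icc (dEven i) (dEven k) = Icc i k := by
  ext j
  simp only [mem_preimage, mem_Icc, Fin.le_def, dEven_val]
  omega

lemma preimage_dOdd_Icc_dOdd_dOdd : dOdd ⁻¹' Icc (dOdd i) (dOdd k) = Icc i k := by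
  ext j
  simp only [mem_preimage, mem_Icc, Fin.le_def, dOdd_val]
  omega

lemma preimage_dEven_Icc_dOdd_dOdd : dEven ⁻¹' Icc (dOdd i) (dOdd k) = Ioc i k := by
  ext j
  simp only [mem_preimage, mem_Icc, mem_Ioc, Fin.le_def, Fin.lt_def, dOdd_val, dEven_val]
  omega

end Preimage

lemma isBlockUnion_archSetoid_iff (θ : Setoid (Fin n)) (s : Set (Fin (2 * n))) :
    IsBlockUnion (archSetoid θ) s ↔ dOdd ⁻¹' s = nextP θ ⁻¹' (dEven ⁻¹' s) := by
  rw [isBlockUnion_iff_le_ker, archSetoid, Set.ext_iff]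
  simp only [mem_preimage]
  constructor
  · intro h j
    exact eq_iff_iff.mp (h (Relation.EqvGen.rel _ _ ⟨j, rfl, rfl⟩))
  · intro h
    refine Setoid.eqvGen_le ?_
    rintro _ _ ⟨j, rfl, rfl⟩
    exact eq_iff_iff.mpr (h j)

lemma IsBlockUnion.archSetoid_Icc {θ : Setoid (Fin n)} {i k : Fin n}
    (h : IsBlockUnion θ (Icc i k)) : IsBlockUnion (archSetoid θ) (Icc (dEven i) (dOdd k)) := by
  rw [isBlockUnion_archSetoid_iff, preimage_dOdd_Icc_dEven_dOdd, preimage_dEven_Icc_dEven_dOdd,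
    isBlockUnion_iff_preimage_nextP_eq.mp h]

lemma IsNC.isBlockUnion_archSetoid_Icc {θ : Setoid (Fin n)} (hθ : IsNC θ) {i k : Fin n}
    (h : θ.r i k) : IsBlockUnion (archSetoid θ) (Icc (dOdd i) (dEven k)) := by
  rw [isBlockUnion_archSetoid_iff, preimage_dOdd_Icc_dOdd_dEven, preimage_dEven_Icc_dOdd_dEven,
    hθ.preimage_nextP_Ioc h]

end Doubling

section Main

variable {n : ℕ} {π ρ : Setoid (Fin n)}

lemma ncJoin_archSetoid_ne_top_of_ncJoin_ne_top (h : ncJoin π ρ ≠ ⊤) :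
    ncJoin (archSetoid π) (archSetoid ρ) ≠ ⊤ := by
  obtain ⟨i, k, hik, hne, hπ, hρ⟩ := (ncJoin_ne_top_iff π ρ).mp h
  refine (ncJoin_ne_top_iff _ _).mpr
    ⟨dEven i, dOdd k, ?_, fun htop => hne ?_, hπ.archSetoid_Icc, hρ.archSetoid_Icc⟩
  · simp only [Fin.le_def, dEven_val, dOdd_val] at hik ⊢
    omega
  · rw [← preimage_dOdd_Icc_dEven_dOdd, htop, preimage_univ]

lemma ncJoin_archSetoid_ne_top_of_inf_ne_bot (hπ : IsNC π) (hρ : IsNC ρ) (h : π ⊓ ρ ≠ ⊥) :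
    ncJoin (archSetoid π) (archSetoid ρ) ≠ ⊤ := by
  obtain ⟨i, k, hik, hπρ⟩ := exists_lt_rel_of_ne_bot h
  obtain ⟨hπik, hρik⟩ := Setoid.inf_iff_and.mp hπρ
  refine (ncJoin_ne_top_iff _ _).mpr ⟨dOdd i, dEven k, ?_, fun htop => ?_,
    hπ.isBlockUnion_archSetoid_Icc hπik, hρ.isBlockUnion_archSetoid_Icc hρik⟩
  · simp only [Fin.le_def, Fin.lt_def, dEven_val, dOdd_val] at hik ⊢
    omega
  · have hi := (htop ▸ mem_univ (dEven i) : dEven i ∈ Icc (dOdd i) (dEven k)).1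
    simp only [Fin.le_def, dEven_val, dOdd_val] at hi
    omega

lemma ncJoin_ne_top_or_inf_ne_bot_of_ncJoin_archSetoid_ne_top
    (h : ncJoin (archSetoid π) (archSetoid ρ) ≠ ⊤) : ncJoin π ρ ≠ ⊤ ∨ π ⊓ ρ ≠ ⊥ := by
  obtain ⟨a, b, hab, hne, hπ, hρ⟩ := (ncJoin_ne_top_iff _ _).mp h
  rw [isBlockUnion_archSetoid_iff] at hπ hρ
  rcases exists_eq_dEven_or_dOdd a with ⟨i, rfl⟩ | ⟨i, rfl⟩ <;>
    rcases exists_eq_dEven_or_dOdd b with ⟨k, rfl⟩ | ⟨k, rfl⟩ <;>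
    simp only [Fin.le_def, dEven_val, dOdd_val] at hab
  -- in the two cases with endpoints of equal parity `nextP π` would be a bijection between sets
  -- of sizes `k - i` and `k + 1 - i`
  · rw [preimage_dOdd_Icc_dEven_dEven, preimage_dEven_Icc_dEven_dEven] at hπ
    have hcard := congrArg ncard hπ
    rw [ncard_preimage_nextP, Fin.ncard_Ico, Fin.ncard_Icc] at hcard
    omega
  · left
    rw [preimage_dOdd_Icc_dEven_dOdd, preimage_dEven_Icc_dEven_dOdd] at hπ hρ
    refine (ncJoin_ne_top_iff π ρ).mpr ⟨i, k, Fin.le_def.mpr (by omega), fun htop => hne ?_,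
      isBlockUnion_iff_preimage_nextP_eq.mpr hπ.symm,
      isBlockUnion_iff_preimage_nextP_eq.mpr hρ.symm⟩
    refine eq_univ_of_preimage_dEven_dOdd ?_ ?_
    · rw [preimage_dEven_Icc_dEven_dOdd, htop]
    · rw [preimage_dOdd_Icc_dEven_dOdd, htop]
  · right
    rw [preimage_dOdd_Icc_dOdd_dEven, preimage_dEven_Icc_dOdd_dEven] at hπ hρ
    have hik : i < k := Fin.lt_def.mpr (by omega)
    intro hbot
    have hπρ : (π ⊓ ρ).r i k := Setoid.inf_iff_and.mpr
      ⟨rel_of_mapsTo_nextP_Ico_Ioc hik hπ.subset, rel_of_mapsTo_nextP_Ico_Ioc hik hρ.subset⟩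
    rw [hbot] at hπρ
    exact hik.ne hπρ
  · rw [preimage_dOdd_Icc_dOdd_dOdd, preimage_dEven_Icc_dOdd_dOdd] at hπ
    have hcard := congrArg ncard hπ
    rw [ncard_preimage_nextP, Fin.ncard_Icc, Fin.ncard_Ioc] at hcard
    omega

end Main

/-- `A(π) ∨ A(ρ) = 1_{2n}` in `NC(2n)` iff `π ∨ ρ = 1_n` and `π ∧ ρ = 0_n`
in `NC(n)`. -/
theorem arch_ncJoin_top_iff (n : ℕ) (π ρ : Setoid (Fin n))
    (hπ : IsNC π) (hρ : IsNC ρ) :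
    ncJoin (archSetoid π) (archSetoid ρ) = ⊤ ↔
      (ncJoin π ρ = ⊤ ∧ π ⊓ ρ = ⊥) := by
  rw [← not_iff_not, not_and_or]
  exact ⟨ncJoin_ne_top_or_inf_ne_bot_of_ncJoin_archSetoid_ne_top,
    fun h => h.elim ncJoin_archSetoid_ne_top_of_ncJoin_ne_top
      (ncJoin_archSetoid_ne_top_of_inf_ne_bot hπ hρ)⟩
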